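/- arXiv:2110.08309 — 2 statements merged into one kernel-verified Lean document; each statement's English description precedes it below -/
import Mathlib

section
/- Let G be a group and L ⊆ A* a biautomatic structure for a surjective monoid homomorphism π : A* → G. Then Pref(L), the language of all prefixes of words of L, is also a biautomatic structure for π. -/
open scoped NNReal

namespace Auto

/-- The generating set `Aπ ∪ (Aπ)⁻¹` of `G` determined by `π : A* → G`. -/
def gens {A G : Type*} [Group G] (π : FreeMonoid A →* G) : Set G :=
  (Set.range fun a : A => π (FreeMonoid.of a)) ∪
    Set.range fun a : A => (π (FreeMonoid.of a))⁻¹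

/-- The word metric `d_A` on `G`: the least `n` such that `g⁻¹h` is a product of `n`
elements of `Aπ ∪ (Aπ)⁻¹`. -/
noncomputable def wdist {A G : Type*} [Group G] (π : FreeMonoid A →* G) (g h : G) : ℕ :=
  sInf {n : ℕ | ∃ l : List G, l.length = n ∧ (∀ x ∈ l, x ∈ gens π) ∧ l.prod = g⁻¹ * h}

/-- Evaluation of a word of `A*` in `G`. -/
def evalW {A G : Type*} [Group G] (π : FreeMonoid A →* G) (w : List A) : G :=
  π (FreeMonoid.ofList w)

/-- `u` and `v` `p`-fellow travel: `d_A(u^[n]π, v^[n]π) ≤ p` for all `n`. -/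
def FellowTravel {A G : Type*} [Group G] (π : FreeMonoid A →* G) (p : ℝ≥0)
    (u v : List A) : Prop :=
  ∀ n : ℕ, (wdist π (evalW π (u.take n)) (evalW π (v.take n)) : ℝ≥0) ≤ p

/-- `u` and `v` are `p`-meeting-fellow-travellers. -/
def MFT {A G : Type*} [Group G] (π : FreeMonoid A →* G) (p : ℝ≥0) (u v : List A) : Prop :=
  FellowTravel π p u v ∧ evalW π u = evalW π v

/-- A language is regular if it is accepted by a finite-state automaton. -/
def IsRegular {A : Type*} (L : Language A) : Prop :=
  ∃ (σ : Type) (_ : Fintype σ) (M : DFA A σ), M.accepts = L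

/-- `L` is an automatic structure for `π`. -/
structure IsAutomaticStructure {A G : Type*} [Group G] (π : FreeMonoid A →* G)
    (L : Language A) : Prop where
  regular : IsRegular L
  onto : ∀ g : G, ∃ w ∈ L, evalW π w = g
  ft : ∃ N : ℕ, ∀ u ∈ L, ∀ v ∈ L,
    wdist π (evalW π u) (evalW π v) ≤ 1 → FellowTravel π N u v

/-- Evaluation of an element of `A ∪ {ε}`. -/
def evalOpt {A G : Type*} [Group G] (π : FreeMonoid A →* G) : Option A → G
  | none => 1
  | some a => π (FreeMonoid.of a)

/-- `L` is a biautomatic structure for `π`. -/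
structure IsBiautomaticStructure {A G : Type*} [Group G] (π : FreeMonoid A →* G)
    (L : Language A) extends IsAutomaticStructure π L : Prop where
  bi : ∃ N : ℕ, ∀ u ∈ L, ∀ v ∈ L, ∀ a : Option A,
    evalW π v = evalOpt π a * evalW π u →
    ∀ n : ℕ, wdist π (evalOpt π a * evalW π (u.take n)) (evalW π (v.take n)) ≤ N

/-- A language is factorial if it is closed under taking factors. -/
def IsFactorial {A : Type*} (L : Language A) : Prop :=
  ∀ u ∈ L, ∀ v : List A, v <:+: u → v ∈ L

/-- `D : ℝ≥0 → ℝ≥0` is a departure function for `(G, L)`. -/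
def IsDepartureFunction {A G : Type*} [Group G] (π : FreeMonoid A →* G) (L : Language A)
    (D : ℝ≥0 → ℝ≥0) : Prop :=
  ∀ w ∈ L, ∀ r : ℝ≥0, ∀ s t : ℕ, D r ≤ (t : ℝ≥0) → s + t ≤ w.length →
    r < (wdist π (evalW π (w.take s)) (evalW π (w.take (s + t))) : ℝ≥0)

/-- Every point of `S` is within distance `N` of `T`. -/
def NbhdIn {A G : Type*} [Group G] (π : FreeMonoid A →* G) (N : ℕ) (S T : Set G) : Prop :=
  ∀ s ∈ S, ∃ t ∈ T, wdist π s t ≤ N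

/-- The Hausdorff distance between `S` and `T` is at most `N`. -/
def HausdorffLE {A G : Type*} [Group G] (π : FreeMonoid A →* G) (N : ℕ)
    (S T : Set G) : Prop :=
  NbhdIn π N S T ∧ NbhdIn π N T S

/-- `H` is an `L`-quasiconvex subgroup of `G`. -/
def IsQuasiconvex {A G : Type*} [Group G] (π : FreeMonoid A →* G) (L : Language A)
    (H : Subgroup G) : Prop :=
  ∃ k : ℕ, ∀ h ∈ H, ∀ h' ∈ H, ∀ w ∈ L, h * evalW π w = h' →
    ∀ n : ℕ, ∃ z ∈ H, wdist π (h * evalW π (w.take n)) z ≤ k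

/-- The bounded reduction property for `(φ, L, L')`. -/
def BRP {A B G G' : Type*} [Group G] [Group G'] (π : FreeMonoid A →* G)
    (π' : FreeMonoid B →* G') (φ : G →* G') (L : Language A) (L' : Language B) : Prop :=
  ∃ N : ℕ, ∀ x : G, ∀ α ∈ L, ∀ β ∈ L', evalW π' β = φ (evalW π α) →
    HausdorffLE π' N (Set.range fun n : ℕ => φ (x * evalW π (α.take n)))
      (Set.range fun n : ℕ => φ x * evalW π' (β.take n))

/-- The synchronous bounded reduction property for `(φ, L, L')`. -/
def SyncBRP {A B G G' : Type*} [Group G] [Group G'] (π : FreeMonoid A →* G)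
    (π' : FreeMonoid B →* G') (φ : G →* G') (L : Language A) (L' : Language B) : Prop :=
  ∃ N : ℕ, ∀ x : G, ∀ α ∈ L, ∀ β ∈ L', evalW π' β = φ (evalW π α) →
    ∀ n : ℕ, wdist π' (φ (x * evalW π (α.take n))) (φ x * evalW π' (β.take n)) ≤ N

/-- The fellow traveller bounded reduction property (FT-BRP) for `(φ, L, L')`. -/
def FTBRP {A B G G' : Type*} [Group G] [Group G'] (π : FreeMonoid A →* G)
    (π' : FreeMonoid B →* G') (φ : G →* G') (L : Language A) (L' : Language B) : Prop :=
  ∀ p : ℝ≥0, ∃ q : ℝ≥0,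
    ∀ u₁ ∈ L, ∀ u₂ ∈ L, ∀ u₃ ∈ L, ∀ u₁' ∈ L', ∀ u₂' ∈ L', ∀ u₃' ∈ L',
      evalW π' u₁' = φ (evalW π u₁) → evalW π' u₂' = φ (evalW π u₂) →
        evalW π' u₃' = φ (evalW π u₃) →
          MFT π p (u₁ ++ u₂) u₃ → MFT π' q (u₁' ++ u₂') u₃'

/-- The natural homomorphism `(A ⊔ B)* → G` agreeing with `π₁` on `A` and `π₂` on `B`. -/
def sumHom {A B G : Type*} [Group G] (π₁ : FreeMonoid A →* G) (π₂ : FreeMonoid B →* G) :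
    FreeMonoid (A ⊕ B) →* G :=
  FreeMonoid.lift (Sum.elim (fun a => π₁ (FreeMonoid.of a)) fun b => π₂ (FreeMonoid.of b))

/-- The union `L₁ ∪ L₂` viewed as a language over `A ⊔ B`. -/
def unionLang {A B : Type*} (L₁ : Language A) (L₂ : Language B) : Language (A ⊕ B) :=
  {w : List (A ⊕ B) | (∃ u ∈ L₁, w = u.map Sum.inl) ∨ ∃ v ∈ L₂, w = v.map Sum.inr}

/-- `L` is an asynchronous automatic structure for `π`. -/
def IsAsyncAutomaticStructure {A G : Type*} [Group G] (π : FreeMonoid A →* G)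
    (L : Language A) : Prop :=
  IsRegular L ∧ (∀ g : G, ∃ w ∈ L, evalW π w = g) ∧
    ∃ p : ℕ, ∀ u ∈ L, ∀ v ∈ L, wdist π (evalW π u) (evalW π v) ≤ 1 →
      ∃ φ ψ : ℕ → ℕ, Monotone φ ∧ Monotone ψ ∧
        Function.Surjective φ ∧ Function.Surjective ψ ∧
          ∀ t : ℕ, wdist π (evalW π (u.take (φ t))) (evalW π (v.take (ψ t))) ≤ p

/-- `L₁` and `L₂` are equivalent automatic structures. -/
def LangEquivalent {A B G : Type*} [Group G] (π₁ : FreeMonoid A →* G)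
    (π₂ : FreeMonoid B →* G) (L₁ : Language A) (L₂ : Language B) : Prop :=
  IsAsyncAutomaticStructure (sumHom π₁ π₂) (unionLang L₁ L₂)

/-- `L₁` and `L₂` are synchronously equivalent automatic structures. -/
def LangSyncEquivalent {A B G : Type*} [Group G] (π₁ : FreeMonoid A →* G)
    (π₂ : FreeMonoid B →* G) (L₁ : Language A) (L₂ : Language B) : Prop :=
  IsAutomaticStructure (sumHom π₁ π₂) (unionLang L₁ L₂)

/-- `L` has the Hausdorff closeness property. -/
def HausClose {A G : Type*} [Group G] (π : FreeMonoid A →* G) (L : Language A) : Prop :=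
  ∃ N : ℕ, ∀ u ∈ L, ∀ v ∈ L, wdist π (evalW π u) (evalW π v) ≤ 1 →
    HausdorffLE π N (Set.range fun n : ℕ => evalW π (u.take n))
      (Set.range fun n : ℕ => evalW π (v.take n))

/-- The padded alphabet `C = (A×B) ∪ (A×{$}) ∪ ({$}×B)` of convolution. -/
abbrev ConvAlphabet (A B : Type*) := (A × B) ⊕ (A ⊕ B)

/-- The convolution `u ⋄ v` of two words. -/
def conv {A B : Type*} : List A → List B → List (ConvAlphabet A B)
  | [], [] => []
  | [], b :: v => Sum.inr (Sum.inr b) :: conv [] v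
  | a :: u, [] => Sum.inr (Sum.inl a) :: conv u []
  | a :: u, b :: v => Sum.inl (a, b) :: conv u v
  termination_by u v => u.length + v.length

/-- The convolution `L₁ ⋄ L₂` of two languages. -/
def convLang {A B : Type*} (L₁ : Language A) (L₂ : Language B) :
    Language (ConvAlphabet A B) :=
  {w : List (ConvAlphabet A B) | ∃ u ∈ L₁, ∃ v ∈ L₂, w = conv u v}

/-- The natural homomorphism `C* → G × G'` for the convolution alphabet. -/
def convHom {A B G G' : Type*} [Group G] [Group G'] (π₁ : FreeMonoid A →* G)
    (π₂ : FreeMonoid B →* G') : FreeMonoid (ConvAlphabet A B) →* G × G' :=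
  FreeMonoid.lift fun c =>
    match c with
    | Sum.inl (a, b) => (π₁ (FreeMonoid.of a), π₂ (FreeMonoid.of b))
    | Sum.inr (Sum.inl a) => (π₁ (FreeMonoid.of a), 1)
    | Sum.inr (Sum.inr b) => (1, π₂ (FreeMonoid.of b))

/-- A group is automatic if it admits an automatic structure over some finite alphabet. -/
def IsAutomaticGroup (G : Type*) [Group G] : Prop :=
  ∃ (A : Type) (_ : Fintype A) (π : FreeMonoid A →* G) (L : Language A),
    IsAutomaticStructure π L

end Auto

open Auto

/-!
Every prefix `u` of a word of `L` extends to a word `u y ∈ L` with `|y|` bounded by the number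
of states `C` of an automaton for `L`. Applying the fellow traveller property along a geodesic,
words of `L` whose values are at distance `k` fellow travel at distance `(k + 1) N`. Hence a word
`w ∈ L` with `wπ = uπ`, which lies within `C` of `u y`, fellow travels `u` at a uniform distance
`K`. Replacing both words of `Pref(L)` by such representatives in `L` transfers the fellow
traveller and the biautomatic conditions from `L` to `Pref(L)` at a cost of `2K`.
-/

namespace DFA

variable {α σ : Type*} [Fintype σ]

theorem exists_evalFrom_mem_accept_length_le (M : DFA α σ) {s : σ} {y : List α}
    (hy : M.evalFrom s y ∈ M.accept) :
    ∃ y', y'.length ≤ Fintype.card σ ∧ M.evalFrom s y' ∈ M.accept := by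
  induction h : y.length using Nat.strong_induction_on generalizing y with
  | _ n ih =>
    by_cases hshort : y.length ≤ Fintype.card σ
    · exact ⟨y, hshort, hy⟩
    -- cut out a loop of the run and recurse on the shorter word
    obtain ⟨_, a, b, c, rfl, -, hb, ha, -, hc⟩ :=
      M.evalFrom_split (x := y) (s := s) (le_of_not_ge hshort) rfl
    refine ih (a ++ c).length ?_ (by rwa [evalFrom_of_append, ha, hc]) rfl
    have : b.length ≠ 0 := by simpa using hb
    simp only [List.length_append] at h ⊢
    omega

end DFA

namespace Auto

variable {A G : Type*} [Group G] {π : FreeMonoid A →* G} {L : Language A}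

theorem IsRegular.prefixes (h : IsRegular L) : IsRegular {w : List A | ∃ v ∈ L, w <+: v} := by
  obtain ⟨σ, _, M, rfl⟩ := h
  refine ⟨σ, ‹_›, ⟨M.step, M.start, {s | ∃ y, M.evalFrom s y ∈ M.accept}⟩, ?_⟩
  ext w
  simp only [DFA.mem_accepts, DFA.eval, Set.mem_ofPred_eq, List.prefix_iff_eq_append]
  constructor
  · rintro ⟨y, hy⟩
    exact ⟨w ++ y, by rwa [DFA.evalFrom_of_append], by simp⟩
  · rintro ⟨v, hv, hwv⟩
    rw [← hwv, DFA.evalFrom_of_append] at hv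
    exact ⟨_, hv⟩

theorem IsRegular.exists_append_mem_length_le (h : IsRegular L) :
    ∃ C : ℕ, ∀ u y : List A, u ++ y ∈ L → ∃ y', y'.length ≤ C ∧ u ++ y' ∈ L := by
  obtain ⟨σ, _, M, rfl⟩ := h
  refine ⟨Fintype.card σ, fun u y huy => ?_⟩
  simp only [DFA.mem_accepts, DFA.eval, DFA.evalFrom_of_append] at huy ⊢
  exact M.exists_evalFrom_mem_accept_length_le huy

theorem IsAutomaticStructure.surjective (hL : IsAutomaticStructure π L) :
    Function.Surjective π := fun g =>
  let ⟨w, _, hw⟩ := hL.onto g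
  ⟨FreeMonoid.ofList w, hw⟩

theorem evalW_append (u v : List A) : evalW π (u ++ v) = evalW π u * evalW π v := by
  simp [evalW]

theorem exists_gens_prod_eq_evalW (y : List A) :
    ∃ l : List G, l.length = y.length ∧ (∀ x ∈ l, x ∈ gens π) ∧ l.prod = evalW π y := by
  refine ⟨y.map fun a => π (FreeMonoid.of a), List.length_map _, ?_, ?_⟩
  · simp only [List.mem_map]
    rintro _ ⟨a, -, rfl⟩
    exact Or.inl ⟨a, rfl⟩
  · induction y <;> simp_all [evalW]

theorem fellowTravel_natCast_iff {N : ℕ} {u v : List A} :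
    FellowTravel π N u v ↔ ∀ n, wdist π (evalW π (u.take n)) (evalW π (v.take n)) ≤ N :=
  forall_congr' fun _ => Nat.cast_le

section WordMetric

theorem wdist_le_length {g h : G} {l : List G} (hl : ∀ x ∈ l, x ∈ gens π)
    (hprod : l.prod = g⁻¹ * h) : wdist π g h ≤ l.length :=
  Nat.sInf_le ⟨l, rfl, hl, hprod⟩

theorem wdist_mul_evalW_le (g : G) (y : List A) : wdist π g (g * evalW π y) ≤ y.length := by
  obtain ⟨l, hlen, hl, hprod⟩ := exists_gens_prod_eq_evalW (π := π) y
  exact hlen ▸ wdist_le_length hl (by rw [hprod, inv_mul_cancel_left])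

theorem wdist_self (g : G) : wdist π g g = 0 :=
  Nat.le_zero.mp <| wdist_le_length (l := []) (by simp) (by simp)

theorem wdist_mul_left (x g h : G) : wdist π (x * g) (x * h) = wdist π g h := by
  simp only [wdist, mul_inv_rev, mul_assoc, inv_mul_cancel_left]

variable (hπ : Function.Surjective π)
include hπ

theorem exists_gens_prod_eq_of_length_eq_wdist (g h : G) :
    ∃ l : List G, l.length = wdist π g h ∧ (∀ x ∈ l, x ∈ gens π) ∧ l.prod = g⁻¹ * h := by
  obtain ⟨w, hw⟩ := hπ (g⁻¹ * h)
  obtain ⟨l, -, hl, hprod⟩ := exists_gens_prod_eq_evalW (π := π) (FreeMonoid.toList w)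
  exact Nat.sInf_mem
    (s := {n | ∃ l : List G, l.length = n ∧ (∀ x ∈ l, x ∈ gens π) ∧ l.prod = g⁻¹ * h})
    ⟨l.length, l, rfl, hl, hprod.trans hw⟩

theorem wdist_comm (g h : G) : wdist π g h = wdist π h g := by
  suffices key : ∀ g h : G, wdist π h g ≤ wdist π g h from le_antisymm (key h g) (key g h)
  intro g h
  obtain ⟨l, hlen, hl, hprod⟩ := exists_gens_prod_eq_of_length_eq_wdist hπ g h
  refine hlen ▸ (wdist_le_length (l := (l.map (·⁻¹)).reverse) ?_ ?_).trans (by simp)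
  · simp only [List.mem_reverse, List.mem_map]
    rintro _ ⟨x, hx, rfl⟩
    rcases hl x hx with ⟨a, rfl⟩ | ⟨a, rfl⟩
    · exact Or.inr ⟨a, rfl⟩
    · exact Or.inl ⟨a, (inv_inv _).symm⟩
  · rw [← List.prod_inv_reverse, hprod, mul_inv_rev, inv_inv]

theorem wdist_triangle (g k h : G) : wdist π g h ≤ wdist π g k + wdist π k h := by
  obtain ⟨l₁, hlen₁, hl₁, hprod₁⟩ := exists_gens_prod_eq_of_length_eq_wdist hπ g k
  obtain ⟨l₂, hlen₂, hl₂, hprod₂⟩ := exists_gens_prod_eq_of_length_eq_wdist hπ k h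
  refine (wdist_le_length (l := l₁ ++ l₂) ?_ ?_).trans (by simp [hlen₁, hlen₂])
  · simpa only [List.mem_append, or_imp, forall_and] using ⟨hl₁, hl₂⟩
  · rw [List.prod_append, hprod₁, hprod₂, mul_assoc, mul_inv_cancel_left]

theorem wdist_le_add_add (g g' h' h : G) :
    wdist π g h ≤ wdist π g g' + wdist π g' h' + wdist π h' h :=
  (wdist_triangle hπ g h' h).trans <| Nat.add_le_add_right (wdist_triangle hπ g g' h') _

end WordMetric

section FellowTraveller

variable {N : ℕ} (hπ : Function.Surjective π) (onto : ∀ g : G, ∃ w ∈ L, evalW π w = g)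
  (hft : ∀ u ∈ L, ∀ v ∈ L, wdist π (evalW π u) (evalW π v) ≤ 1 → FellowTravel π N u v)
include hπ onto hft

theorem wdist_take_le_of_evalW_eq_mul_prod {l : List G} (hl : ∀ x ∈ l, x ∈ gens π)
    {u v : List A} (hu : u ∈ L) (hv : v ∈ L) (huv : evalW π v = evalW π u * l.prod) (n : ℕ) :
    wdist π (evalW π (u.take n)) (evalW π (v.take n)) ≤ (l.length + 1) * N := by
  induction l generalizing u with
  | nil =>
    refine fellowTravel_natCast_iff.mp (hft u hu v hv ?_) n |>.trans (by simp)
    rw [huv, List.prod_nil, mul_one, wdist_self]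
    exact zero_le_one
  | cons c l ih =>
    obtain ⟨r, hr, hru⟩ := onto (evalW π u * c)
    have hstep : wdist π (evalW π u) (evalW π r) ≤ 1 :=
      wdist_le_length (l := [c]) (by simpa using hl c List.mem_cons_self) (by simp [hru])
    have hur := fellowTravel_natCast_iff.mp (hft u hu r hr hstep) n
    have hrv := ih (fun x hx => hl x (List.mem_cons_of_mem c hx)) hr
      (by rw [huv, hru, List.prod_cons, mul_assoc])
    calc wdist π (evalW π (u.take n)) (evalW π (v.take n))
        ≤ wdist π (evalW π (u.take n)) (evalW π (r.take n)) +
          wdist π (evalW π (r.take n)) (evalW π (v.take n)) := wdist_triangle hπ _ _ _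
      _ ≤ N + (l.length + 1) * N := Nat.add_le_add hur hrv
      _ = ((c :: l).length + 1) * N := by simp only [List.length_cons]; ring

theorem wdist_take_le_of_wdist_le {u v : List A} (hu : u ∈ L) (hv : v ∈ L) {k : ℕ}
    (hk : wdist π (evalW π u) (evalW π v) ≤ k) (n : ℕ) :
    wdist π (evalW π (u.take n)) (evalW π (v.take n)) ≤ (k + 1) * N := by
  obtain ⟨l, hlen, hl, hprod⟩ := exists_gens_prod_eq_of_length_eq_wdist hπ (evalW π u) (evalW π v)
  refine (wdist_take_le_of_evalW_eq_mul_prod hπ onto hft hl hu hv ?_ n).trans ?_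
  · rw [hprod, mul_inv_cancel_left]
  · gcongr
    omega

end FellowTraveller

theorem IsAutomaticStructure.exists_wdist_take_le_of_prefix (hL : IsAutomaticStructure π L) :
    ∃ K : ℕ, ∀ u v : List A, u <+: v → v ∈ L → ∀ w ∈ L, evalW π w = evalW π u →
      ∀ n, wdist π (evalW π (u.take n)) (evalW π (w.take n)) ≤ K := by
  have hπ := hL.surjective
  obtain ⟨N, hft⟩ := hL.ft
  obtain ⟨C, hC⟩ := hL.regular.exists_append_mem_length_le
  refine ⟨C + (C + 1) * N, ?_⟩
  rintro u _ ⟨y, rfl⟩ hv w hw hwu n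
  obtain ⟨y', hy'C, hy'⟩ := hC u y hv
  have hcomplete : wdist π (evalW π w) (evalW π (u ++ y')) ≤ C := by
    rw [evalW_append, ← hwu]
    exact (wdist_mul_evalW_le _ _).trans hy'C
  have htake : wdist π (evalW π (u.take n)) (evalW π ((u ++ y').take n)) ≤ C := by
    rw [List.take_append, evalW_append]
    exact (wdist_mul_evalW_le _ _).trans <| (List.length_take_le' _ _).trans hy'C
  calc wdist π (evalW π (u.take n)) (evalW π (w.take n))
      ≤ wdist π (evalW π (u.take n)) (evalW π ((u ++ y').take n)) +
        wdist π (evalW π ((u ++ y').take n)) (evalW π (w.take n)) := wdist_triangle hπ _ _ _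
    _ ≤ C + (C + 1) * N := by
      refine Nat.add_le_add htake ?_
      rw [wdist_comm hπ]
      exact wdist_take_le_of_wdist_le hπ hL.onto hft hw hy' hcomplete n

end Auto

theorem pref_biautomatic_general {A G : Type*} [Group G]
    (π : FreeMonoid A →* G)
    (L : Language A) (hL : IsBiautomaticStructure π L) :
    IsBiautomaticStructure π {w : List A | ∃ v ∈ L, w <+: v} := by
  have hπ := hL.surjective
  obtain ⟨Nf, hft⟩ := hL.ft
  obtain ⟨Nb, hbi⟩ := hL.bi
  obtain ⟨K, hK⟩ := hL.exists_wdist_take_le_of_prefix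
  refine ⟨⟨hL.regular.prefixes, fun g => ?_, K + Nf + K, ?_⟩, K + Nb + K, ?_⟩
  · obtain ⟨w, hw, rfl⟩ := hL.onto g
    exact ⟨w, ⟨w, hw, List.prefix_refl w⟩, rfl⟩
  · rintro u ⟨u', hu', hu⟩ v ⟨v', hv', hv⟩ huv
    obtain ⟨w, hw, hwu⟩ := hL.onto (evalW π u)
    obtain ⟨z, hz, hzv⟩ := hL.onto (evalW π v)
    have hwz := fellowTravel_natCast_iff.mp (hft w hw z hz (hwu ▸ hzv ▸ huv))
    refine fellowTravel_natCast_iff.mpr fun n =>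
      (wdist_le_add_add hπ _ (evalW π (w.take n)) (evalW π (z.take n)) _).trans ?_
    rw [wdist_comm hπ _ (evalW π (v.take n))]
    exact Nat.add_le_add (Nat.add_le_add (hK u u' hu hu' w hw hwu n) (hwz n))
      (hK v v' hv hv' z hz hzv n)
  · rintro u ⟨u', hu', hu⟩ v ⟨v', hv', hv⟩ a huv n
    obtain ⟨w, hw, hwu⟩ := hL.onto (evalW π u)
    obtain ⟨z, hz, hzv⟩ := hL.onto (evalW π v)
    have hwz := hbi w hw z hz a (hwu ▸ hzv ▸ huv) n
    refine (wdist_le_add_add hπ _ (evalOpt π a * evalW π (w.take n)) (evalW π (z.take n))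
      _).trans ?_
    rw [wdist_mul_left, wdist_comm hπ _ (evalW π (v.take n))]
    exact Nat.add_le_add (Nat.add_le_add (hK u u' hu hu' w hw hwu n) hwz)
      (hK v v' hv hv' z hz hzv n)

/-- If `L` is a biautomatic structure for a surjective `π : A* → G`,
then `Pref(L)` is also a biautomatic structure for `π`. -/
theorem pref_biautomatic {A G : Type*} [Fintype A] [Group G]
    (π : FreeMonoid A →* G) (hπ : Function.Surjective π)
    (L : Language A) (hL : IsBiautomaticStructure π L) :
    IsBiautomaticStructure π {w : List A | ∃ v ∈ L, w <+: v} :=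
  pref_biautomatic_general π L hL
end

section
/- Every biautomatic group is f-biautomatic: if L ⊆ A* is a biautomatic structure for a surjective monoid homomorphism π : A* → G, then Fact(L) = Pref(Suff(L)), the language of all factors (contiguous subwords) of words of L, is a factorial biautomatic structure for π. -/
open scoped NNReal

open Auto

section AuxLemmas

open Auto

variable {A G : Type*} [Group G] (π : FreeMonoid A →* G)

lemma evalW_nil' : evalW π ([] : List A) = 1 := map_one π

lemma evalW_append' (u v : List A) : evalW π (u ++ v) = evalW π u * evalW π v := by
  show π (FreeMonoid.ofList u * FreeMonoid.ofList v) = _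
  rw [map_mul]; rfl

lemma evalW_cons' (a : A) (w : List A) :
    evalW π (a :: w) = π (FreeMonoid.of a) * evalW π w := by
  show π (FreeMonoid.of a * FreeMonoid.ofList w) = _
  rw [map_mul]; rfl

lemma evalW_eq_prod' (w : List A) :
    evalW π w = (w.map fun a => π (FreeMonoid.of a)).prod := by
  induction w with
  | nil => simpa using evalW_nil' π
  | cons a w ih => rw [evalW_cons', ih, List.map_cons, List.prod_cons]

lemma evalOpt_some' (a : A) : evalOpt π (some a) = π (FreeMonoid.of a) := rfl

lemma gens_inv' {g : G} (h : g ∈ gens π) : g⁻¹ ∈ gens π := by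
  rcases h with ⟨a, rfl⟩ | ⟨a, rfl⟩
  · exact Or.inr ⟨a, rfl⟩
  · exact Or.inl ⟨a, (inv_inv _).symm⟩

lemma wdist_set_nonempty' (hπ : Function.Surjective π) (g h : G) :
    {n : ℕ | ∃ l : List G, l.length = n ∧ (∀ x ∈ l, x ∈ gens π) ∧
      l.prod = g⁻¹ * h}.Nonempty := by
  obtain ⟨w, hw⟩ := hπ (g⁻¹ * h)
  refine ⟨_, (FreeMonoid.toList w).map (fun a => π (FreeMonoid.of a)), rfl, ?_, ?_⟩
  · intro x hx
    rw [List.mem_map] at hx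
    obtain ⟨a, -, rfl⟩ := hx
    exact Or.inl ⟨a, rfl⟩
  · rw [← evalW_eq_prod']
    show π (FreeMonoid.ofList (FreeMonoid.toList w)) = _
    rw [FreeMonoid.ofList_toList, hw]

lemma wdist_le' {g h : G} {l : List G} (hmem : ∀ x ∈ l, x ∈ gens π)
    (hp : l.prod = g⁻¹ * h) : wdist π g h ≤ l.length :=
  Nat.sInf_le ⟨l, rfl, hmem, hp⟩

lemma wdist_exists' (hπ : Function.Surjective π) (g h : G) :
    ∃ l : List G, l.length = wdist π g h ∧ (∀ x ∈ l, x ∈ gens π) ∧ l.prod = g⁻¹ * h :=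
  Nat.sInf_mem (wdist_set_nonempty' π hπ g h)

lemma wdist_self' (g : G) : wdist π g g = 0 :=
  Nat.eq_zero_of_le_zero (wdist_le' π (l := []) (by simp) (by simp))

lemma wdist_triangle' (hπ : Function.Surjective π) (g h k : G) :
    wdist π g k ≤ wdist π g h + wdist π h k := by
  obtain ⟨l₁, hl₁, m₁, p₁⟩ := wdist_exists' π hπ g h
  obtain ⟨l₂, hl₂, m₂, p₂⟩ := wdist_exists' π hπ h k
  have := wdist_le' π (g := g) (h := k) (l := l₁ ++ l₂)
    (by intro x hx; rcases List.mem_append.mp hx with hx | hx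
        exacts [m₁ x hx, m₂ x hx])
    (by rw [List.prod_append, p₁, p₂]; group)
  simpa [hl₁, hl₂] using this

lemma wdist_mul_left' (x g h : G) : wdist π (x * g) (x * h) = wdist π g h := by
  have e : (x * g)⁻¹ * (x * h) = g⁻¹ * h := by group
  unfold wdist
  rw [e]

lemma wdist_le_comm' (hπ : Function.Surjective π) (g h : G) :
    wdist π h g ≤ wdist π g h := by
  obtain ⟨l, hl, m, p⟩ := wdist_exists' π hπ g h
  have := wdist_le' π (g := h) (h := g) (l := (l.map fun x => x⁻¹).reverse)
    (by intro x hx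
        simp only [List.mem_reverse, List.mem_map] at hx
        obtain ⟨y, hy, rfl⟩ := hx
        exact gens_inv' π (m y hy))
    (by rw [← List.prod_inv_reverse, p]; group)
  simpa [hl] using this

lemma wdist_comm' (hπ : Function.Surjective π) (g h : G) :
    wdist π g h = wdist π h g :=
  le_antisymm (wdist_le_comm' π hπ h g) (wdist_le_comm' π hπ g h)

lemma wdist_mul_evalW_le' (g : G) (w : List A) :
    wdist π g (g * evalW π w) ≤ w.length := by
  have := wdist_le' π (g := g) (h := g * evalW π w)
    (l := w.map fun a => π (FreeMonoid.of a))
    (by intro x hx; rw [List.mem_map] at hx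
        obtain ⟨a, -, rfl⟩ := hx
        exact Or.inl ⟨a, rfl⟩)
    (by rw [← evalW_eq_prod']; group)
  simpa using this

lemma wdist_mul_gen_le' {x : G} (hx : x ∈ gens π) (g : G) :
    wdist π g (g * x) ≤ 1 :=
  wdist_le' π (l := [x]) (by simpa using hx)
    (by rw [List.prod_singleton]; group)

lemma wdist_take_le' {m n : ℕ} (hmn : m ≤ n) (w : List A) :
    wdist π (evalW π (w.take m)) (evalW π (w.take n)) ≤ n - m := by
  have h1 : w.take n = w.take m ++ (w.take n).drop m := by
    conv_lhs => rw [← List.take_append_drop m (w.take n)]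
    rw [List.take_take, min_eq_left hmn]
  have h2 := wdist_mul_evalW_le' π (evalW π (w.take m)) ((w.take n).drop m)
  rw [← evalW_append', ← h1] at h2
  refine h2.trans ?_
  rw [List.length_drop]
  exact Nat.sub_le_sub_right (List.length_take_le _ _) m

end AuxLemmas

section DFALemmas

open Auto

variable {A : Type*}

lemma exists_short_evalFrom {σ : Type} [Fintype σ] (M : DFA A σ) (q : σ) (w : List A) :
    ∃ w' : List A, w'.length ≤ Fintype.card σ ∧ M.evalFrom q w' = M.evalFrom q w := by
  suffices H : ∀ n, ∀ w : List A, w.length = n →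
      ∃ w' : List A, w'.length ≤ Fintype.card σ ∧ M.evalFrom q w' = M.evalFrom q w by
    exact H _ w rfl
  intro n
  induction n using Nat.strong_induction_on with
  | _ n ih =>
    intro w hn
    subst hn
    by_cases hle : w.length ≤ Fintype.card σ
    · exact ⟨w, hle, rfl⟩
    · push_neg at hle
      obtain ⟨i, j, hlt, hfe⟩ : ∃ i j : Fin (Fintype.card σ + 1), (i : ℕ) < (j : ℕ) ∧
          M.evalFrom q (w.take (i : ℕ)) = M.evalFrom q (w.take (j : ℕ)) := by
        obtain ⟨i, j, hij, hfe⟩ := Fintype.exists_ne_map_eq_of_card_lt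
          (fun i : Fin (Fintype.card σ + 1) => M.evalFrom q (w.take (i : ℕ))) (by simp)
        rcases lt_or_gt_of_ne (fun h : (i : ℕ) = (j : ℕ) => hij (Fin.ext h)) with h | h
        · exact ⟨i, j, h, hfe⟩
        · exact ⟨j, i, h, hfe.symm⟩
      have hj : (j : ℕ) ≤ w.length := le_of_lt (lt_of_le_of_lt (Nat.lt_succ_iff.mp j.isLt) hle)
      have hlen : (w.take (i : ℕ) ++ w.drop (j : ℕ)).length < w.length := by
        rw [List.length_append, List.length_take, List.length_drop,
          min_eq_left (le_of_lt (lt_of_lt_of_le hlt hj))]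
        omega
      have heval : M.evalFrom q (w.take (i : ℕ) ++ w.drop (j : ℕ)) = M.evalFrom q w := by
        rw [DFA.evalFrom_of_append, hfe, ← DFA.evalFrom_of_append, List.take_append_drop]
      obtain ⟨w', hw'len, hw'eval⟩ := ih _ hlen _ rfl
      exact ⟨w', hw'len, hw'eval.trans heval⟩

lemma bounded_factor' {L : Language A} {σ : Type} [Fintype σ] (M : DFA A σ)
    (hM : M.accepts = L) {w : List A} (hw : ∃ v ∈ L, w <:+: v) :
    ∃ p s : List A, p.length ≤ Fintype.card σ ∧ s.length ≤ Fintype.card σ ∧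
      (p ++ w ++ s) ∈ L := by
  obtain ⟨v, hv, p₀, s₀, rfl⟩ := hw
  rw [← hM, DFA.mem_accepts] at hv
  have hv' : M.evalFrom (M.evalFrom (M.evalFrom M.start p₀) w) s₀ ∈ M.accept := by
    have : M.evalFrom M.start (p₀ ++ w ++ s₀) ∈ M.accept := hv
    rwa [DFA.evalFrom_of_append, DFA.evalFrom_of_append] at this
  obtain ⟨p, hp, hpe⟩ := exists_short_evalFrom M M.start p₀
  obtain ⟨s, hs, hse⟩ := exists_short_evalFrom M (M.evalFrom (M.evalFrom M.start p₀) w) s₀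
  refine ⟨p, s, hp, hs, ?_⟩
  rw [← hM, DFA.mem_accepts]
  show M.evalFrom M.start (p ++ w ++ s) ∈ M.accept
  rw [DFA.evalFrom_of_append, DFA.evalFrom_of_append, hpe, hse]
  exact hv'

lemma fact_regular' (L : Language A) (hreg : Auto.IsRegular L) :
    Auto.IsRegular {w : List A | ∃ v ∈ L, w <:+: v} := by
  classical
  obtain ⟨σ, instσ, M, hM⟩ := hreg
  refine ⟨Set σ, inferInstance,
    ⟨fun S a => (fun q => M.step q a) '' S,
     {q | ∃ u : List A, M.evalFrom M.start u = q},
     {S | ∃ q ∈ S, ∃ t : List A, M.evalFrom q t ∈ M.accept}⟩, ?_⟩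
  set N : DFA A (Set σ) :=
    ⟨fun S a => (fun q => M.step q a) '' S,
     {q | ∃ u : List A, M.evalFrom M.start u = q},
     {S | ∃ q ∈ S, ∃ t : List A, M.evalFrom q t ∈ M.accept}⟩ with hN
  have key : ∀ (w : List A) (S : Set σ),
      N.evalFrom S w = (fun q => M.evalFrom q w) '' S := by
    intro w
    induction w with
    | nil => intro S; simp [DFA.evalFrom]
    | cons a w ih =>
      intro S
      show N.evalFrom (N.step S a) w = _
      rw [ih]
      show (fun q => M.evalFrom q w) '' ((fun q => M.step q a) '' S) = _
      rw [Set.image_image]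
      rfl
  ext w
  rw [DFA.mem_accepts]
  show (∃ q ∈ N.evalFrom N.start w, ∃ t : List A, M.evalFrom q t ∈ M.accept) ↔ _
  rw [key]
  constructor
  · rintro ⟨q, ⟨q₀, ⟨u, rfl⟩, rfl⟩, t, ht⟩
    refine ⟨u ++ w ++ t, ?_, u, t, rfl⟩
    rw [← hM, DFA.mem_accepts]
    show M.evalFrom M.start (u ++ w ++ t) ∈ M.accept
    rw [DFA.evalFrom_of_append, DFA.evalFrom_of_append]
    exact ht
  · rintro ⟨v, hv, u, t, rfl⟩
    rw [← hM, DFA.mem_accepts] at hv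
    have hv' : M.evalFrom (M.evalFrom (M.evalFrom M.start u) w) t ∈ M.accept := by
      have : M.evalFrom M.start (u ++ w ++ t) ∈ M.accept := hv
      rwa [DFA.evalFrom_of_append, DFA.evalFrom_of_append] at this
    exact ⟨M.evalFrom (M.evalFrom M.start u) w,
      ⟨M.evalFrom M.start u, ⟨u, rfl⟩, rfl⟩, t, hv'⟩

end DFALemmas

section StripLemmas

open Auto

variable {A G : Type*} [Group G] (π : FreeMonoid A →* G)

lemma prefix_strip (hπ : Function.Surjective π) {L : Language A}
    (honto : ∀ g : G, ∃ w ∈ L, evalW π w = g)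
    {K : ℕ} (hK : ∀ u ∈ L, ∀ v ∈ L, ∀ a : Option A,
      evalW π v = evalOpt π a * evalW π u →
      ∀ n : ℕ, wdist π (evalOpt π a * evalW π (u.take n)) (evalW π (v.take n)) ≤ K) :
    ∀ p : List A, ∀ δ ∈ L, ∃ δ' ∈ L, evalW π δ' = (evalW π p)⁻¹ * evalW π δ ∧
      ∀ n : ℕ, wdist π (evalW π (δ.take n)) (evalW π p * evalW π (δ'.take n)) ≤
        p.length * K := by
  intro p
  induction p with
  | nil =>
    intro δ hδ
    refine ⟨δ, hδ, by simp [evalW_nil'], fun n => ?_⟩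
    simp [evalW_nil', wdist_self' π]
  | cons a p' ih =>
    intro δ hδ
    obtain ⟨δ₁, hδ₁L, hδ₁π⟩ := honto ((π (FreeMonoid.of a))⁻¹ * evalW π δ)
    have hrel : evalW π δ = evalOpt π (some a) * evalW π δ₁ := by
      rw [hδ₁π, evalOpt_some']; group
    have hbi := hK δ₁ hδ₁L δ hδ (some a) hrel
    obtain ⟨δ', hδ'L, hδ'π, hδ'd⟩ := ih δ₁ hδ₁L
    refine ⟨δ', hδ'L, ?_, fun n => ?_⟩
    · rw [hδ'π, hδ₁π, evalW_cons']; group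
    · have t1 : wdist π (evalW π (δ.take n))
          (π (FreeMonoid.of a) * evalW π (δ₁.take n)) ≤ K := by
        rw [wdist_comm' π hπ]
        simpa [evalOpt_some'] using hbi n
      have t2 : wdist π (π (FreeMonoid.of a) * evalW π (δ₁.take n))
          (π (FreeMonoid.of a) * (evalW π p' * evalW π (δ'.take n))) ≤ p'.length * K := by
        rw [wdist_mul_left']
        exact hδ'd n
      have h3 := (wdist_triangle' π hπ _ _ _).trans (Nat.add_le_add t1 t2)
      have egoal : evalW π (a :: p') * evalW π (δ'.take n) =
          π (FreeMonoid.of a) * (evalW π p' * evalW π (δ'.take n)) := by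
        rw [evalW_cons']; group
      rw [egoal]
      refine h3.trans ?_
      rw [List.length_cons, Nat.add_mul, one_mul]
      omega

lemma suffix_strip (hπ : Function.Surjective π) {L : Language A}
    (honto : ∀ g : G, ∃ w ∈ L, evalW π w = g)
    {N : ℕ} (hN : ∀ u ∈ L, ∀ v ∈ L, wdist π (evalW π u) (evalW π v) ≤ 1 →
      FellowTravel π N u v) :
    ∀ s : List A, ∀ δ ∈ L, ∃ δ' ∈ L, evalW π δ' = evalW π δ * (evalW π s)⁻¹ ∧
      ∀ n : ℕ, wdist π (evalW π (δ.take n)) (evalW π (δ'.take n)) ≤ s.length * N := by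
  intro s
  induction s with
  | nil =>
    intro δ hδ
    exact ⟨δ, hδ, by simp [evalW_nil'], fun n => by simp [wdist_self' π]⟩
  | cons b s' ih =>
    intro δ hδ
    obtain ⟨δ₁, hδ₁L, hδ₁π, hδ₁d⟩ := ih δ hδ
    obtain ⟨δ', hδ'L, hδ'π⟩ := honto (evalW π δ₁ * (π (FreeMonoid.of b))⁻¹)
    have hd1 : wdist π (evalW π δ₁) (evalW π δ') ≤ 1 := by
      rw [hδ'π]
      exact wdist_mul_gen_le' π (Or.inr ⟨b, rfl⟩) _
    have hft := hN δ₁ hδ₁L δ' hδ'L hd1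
    refine ⟨δ', hδ'L, ?_, fun n => ?_⟩
    · rw [hδ'π, hδ₁π, evalW_cons']; group
    · have t2 : wdist π (evalW π (δ₁.take n)) (evalW π (δ'.take n)) ≤ N :=
        Nat.cast_le.mp (hft n)
      have h3 := (wdist_triangle' π hπ _ _ _).trans (Nat.add_le_add (hδ₁d n) t2)
      refine h3.trans ?_
      rw [List.length_cons, Nat.add_mul, one_mul]

lemma shadow_lemma (hπ : Function.Surjective π) {L : Language A}
    (honto : ∀ g : G, ∃ w ∈ L, evalW π w = g)
    {K : ℕ} (hK : ∀ u ∈ L, ∀ v ∈ L, ∀ a : Option A,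
      evalW π v = evalOpt π a * evalW π u →
      ∀ n : ℕ, wdist π (evalOpt π a * evalW π (u.take n)) (evalW π (v.take n)) ≤ K)
    {N : ℕ} (hN : ∀ u ∈ L, ∀ v ∈ L, wdist π (evalW π u) (evalW π v) ≤ 1 →
      FellowTravel π N u v)
    {c : ℕ} (hc : ∀ w : List A, (∃ v ∈ L, w <:+: v) → ∃ p s : List A,
      p.length ≤ c ∧ s.length ≤ c ∧ (p ++ w ++ s) ∈ L)
    {u : List A} (hu : ∃ v ∈ L, u <:+: v) :
    ∃ β ∈ L, evalW π β = evalW π u ∧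
      ∀ n : ℕ, wdist π (evalW π (u.take n)) (evalW π (β.take n)) ≤
        c * K + c + c + c * N := by
  obtain ⟨p, s, hp, hs, hα⟩ := hc u hu
  obtain ⟨δ, hδL, hδπ, hδd⟩ := prefix_strip π hπ honto hK p _ hα
  obtain ⟨β, hβL, hβπ, hβd⟩ := suffix_strip π hπ honto hN s δ hδL
  have hδval : evalW π δ = evalW π u * evalW π s := by
    rw [hδπ, evalW_append', evalW_append']; group
  refine ⟨β, hβL, by rw [hβπ, hδval]; group, fun n => ?_⟩
  set i := p.length with hi
  have e1 : (p ++ u ++ s).take (i + n) = p ++ (u.take n ++ s.take (n - u.length)) := by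
    rw [List.append_assoc, List.take_append,
      List.take_of_length_le (by omega : p.length ≤ i + n)]
    have h2 : i + n - p.length = n := by omega
    rw [h2, List.take_append]
  have h1 : evalW π ((p ++ u ++ s).take (i + n)) =
      evalW π p * (evalW π (u.take n) * evalW π (s.take (n - u.length))) := by
    rw [e1, evalW_append', evalW_append']
  have t1 : wdist π (evalW π (u.take n))
      (evalW π (u.take n) * evalW π (s.take (n - u.length))) ≤ c := by
    refine (wdist_mul_evalW_le' π _ _).trans ?_
    rw [List.length_take]
    omega
  have t2 : wdist π (evalW π (u.take n) * evalW π (s.take (n - u.length)))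
      (evalW π (δ.take (i + n))) ≤ c * K := by
    have h := hδd (i + n)
    rw [h1] at h
    rw [← wdist_mul_left' π (evalW π p)]
    exact h.trans (Nat.mul_le_mul hp le_rfl)
  have t3 : wdist π (evalW π (δ.take (i + n))) (evalW π (δ.take n)) ≤ c := by
    rw [wdist_comm' π hπ]
    refine (wdist_take_le' π (Nat.le_add_left n i) δ).trans ?_
    omega
  have t4 : wdist π (evalW π (δ.take n)) (evalW π (β.take n)) ≤ c * N :=
    (hβd n).trans (Nat.mul_le_mul hs le_rfl)
  have final := (wdist_triangle' π hπ _ _ _).trans (Nat.add_le_add t1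
    ((wdist_triangle' π hπ _ _ _).trans (Nat.add_le_add t2
      ((wdist_triangle' π hπ _ _ _).trans (Nat.add_le_add t3 t4)))))
  exact final.trans_eq (by ring)

end StripLemmas

/-- If `L` is a biautomatic structure for a surjective `π : A* → G`, then
`Fact(L) = Pref(Suff(L))`, the language of all factors of words of `L`, is a factorial
biautomatic structure for `π`. -/
theorem fact_biautomatic {A G : Type*} [Fintype A] [Group G]
    (π : FreeMonoid A →* G) (hπ : Function.Surjective π)
    (L : Language A) (hL : IsBiautomaticStructure π L) :
    IsFactorial {w : List A | ∃ v ∈ L, w <:+: v} ∧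
      IsBiautomaticStructure π {w : List A | ∃ v ∈ L, w <:+: v} := by
  classical
  obtain ⟨σ, instσ, M, hM⟩ := hL.regular
  haveI := instσ
  set c := Fintype.card σ with hcdef
  have hc : ∀ w : List A, (∃ v ∈ L, w <:+: v) → ∃ p s : List A,
      p.length ≤ c ∧ s.length ≤ c ∧ (p ++ w ++ s) ∈ L :=
    fun w hw => bounded_factor' M hM hw
  obtain ⟨N, hN⟩ := hL.ft
  obtain ⟨K, hK⟩ := hL.bi
  have honto := hL.onto
  set Λ := c * K + c + c + c * N with hΛ
  have shadow : ∀ u : List A, (∃ v ∈ L, u <:+: v) → ∃ β ∈ L, evalW π β = evalW π u ∧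
      ∀ n : ℕ, wdist π (evalW π (u.take n)) (evalW π (β.take n)) ≤ Λ :=
    fun u hu => shadow_lemma π hπ honto hK hN hc hu
  constructor
  · rintro u ⟨v, hv, huv⟩ w hwu
    exact ⟨v, hv, hwu.trans huv⟩
  · refine ⟨⟨fact_regular' L hL.regular, ?_, ⟨Λ + N + Λ, ?_⟩⟩, ⟨Λ + K + Λ, ?_⟩⟩
    · intro g
      obtain ⟨w, hw, he⟩ := honto g
      exact ⟨w, ⟨w, hw, List.infix_refl w⟩, he⟩
    · intro u hu v hv hdist
      obtain ⟨βu, hβuL, hβuπ, hβud⟩ := shadow u hu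
      obtain ⟨βv, hβvL, hβvπ, hβvd⟩ := shadow v hv
      have hdβ : wdist π (evalW π βu) (evalW π βv) ≤ 1 := by
        rw [hβuπ, hβvπ]; exact hdist
      have hft := hN βu hβuL βv hβvL hdβ
      intro n
      have t1 : wdist π (evalW π (u.take n)) (evalW π (βu.take n)) ≤ Λ := hβud n
      have t2 : wdist π (evalW π (βu.take n)) (evalW π (βv.take n)) ≤ N :=
        Nat.cast_le.mp (hft n)
      have t3 : wdist π (evalW π (βv.take n)) (evalW π (v.take n)) ≤ Λ := by
        rw [wdist_comm' π hπ]; exact hβvd n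
      have main := (wdist_triangle' π hπ _ _ _).trans (Nat.add_le_add t1
        ((wdist_triangle' π hπ _ _ _).trans (Nat.add_le_add t2 t3)))
      exact Nat.cast_le.mpr (main.trans_eq (by ring))
    · intro u hu v hv a hrel n
      obtain ⟨βu, hβuL, hβuπ, hβud⟩ := shadow u hu
      obtain ⟨βv, hβvL, hβvπ, hβvd⟩ := shadow v hv
      have hrelβ : evalW π βv = evalOpt π a * evalW π βu := by
        rw [hβuπ, hβvπ]; exact hrel
      have t2 : wdist π (evalOpt π a * evalW π (βu.take n)) (evalW π (βv.take n)) ≤ K :=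
        hK βu hβuL βv hβvL a hrelβ n
      have t1 : wdist π (evalOpt π a * evalW π (u.take n))
          (evalOpt π a * evalW π (βu.take n)) ≤ Λ := by
        rw [wdist_mul_left']; exact hβud n
      have t3 : wdist π (evalW π (βv.take n)) (evalW π (v.take n)) ≤ Λ := by
        rw [wdist_comm' π hπ]; exact hβvd n
      have main := (wdist_triangle' π hπ _ _ _).trans (Nat.add_le_add t1
        ((wdist_triangle' π hπ _ _ _).trans (Nat.add_le_add t2 t3)))
      exact main.trans_eq (by ring)
end
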